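/- arXiv:1409.0166 — 4 statements merged into one kernel-verified Lean document; each statement's English description precedes it below -/
import Mathlib

section
/- Let →₁ and →₂ be binary relations on a set A. If (1) →₁ ⊆ →₂, (2) →₂ is well-founded (there is no infinite →₂-chain), and (3) →₂ ⊆ (→₁ ∘ →₂* ∘ ↔₁* ∘ ←₂*), where ↔₁* denotes the reflexive-transitive-symmetric closure of →₁ and →₂* the reflexive-transitive closure of →₂, then the reflexive-transitive-symmetric closures of →₁ and →₂ coincide: ↔₁* = ↔₂*. -/
/-- reflexive-transitive closure -/
def star {A : Type*} (r : A → A → Prop) : A → A → Prop := Relation.ReflTransGen r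

/-- reflexive-transitive-symmetric closure -/
def conv {A : Type*} (r : A → A → Prop) : A → A → Prop :=
  Relation.ReflTransGen (fun a b => r a b ∨ r b a)

/-!
Every `r₂`-step, and hence every `r₂`-path, is an `r₁`-conversion, by well-founded induction on
the source `a` of the path: rewriting the first step `a →₂ c` by hypothesis gives
`a →₁ x →₂* y ↔₁* z ←₂* c`, and both `x` and `c` are `r₂`-successors of `a`, so the induction
hypothesis turns `x →₂* y`, `c →₂* z` and the rest of the path `c →₂* b` into `r₁`-conversions.
-/

open Relation

theorem conv_eq_eqvGen {A : Type*} (r : A → A → Prop) : conv r = EqvGen r :=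
  EqvGen.reflTransGen_symmGen r

section

variable {α : Type*} {r₁ r₂ : α → α → Prop}

theorem eqvGen_of_reflTransGen_of_le_comp (h₁ : r₁ ≤ r₂) (hwf : WellFounded (flip r₂))
    (h₃ : ∀ a b, r₂ a b →
      ∃ x y z, r₁ a x ∧ ReflTransGen r₂ x y ∧ EqvGen r₁ y z ∧ ReflTransGen r₂ b z)
    {a b : α} (hab : ReflTransGen r₂ a b) : EqvGen r₁ a b := by
  induction a using hwf.induction generalizing b with
  | _ a ih =>
    rcases hab.cases_head with rfl | ⟨c, hac, hcb⟩
    · exact .refl a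
    obtain ⟨x, y, z, hax, hxy, hyz, hcz⟩ := h₃ a c hac
    have hay : EqvGen r₁ a y := .trans _ _ _ (.rel _ _ hax) (ih x (h₁ a x hax) hxy)
    have hzb : EqvGen r₁ z b := .trans _ _ _ (ih c hac hcz).symm (ih c hac hcb)
    exact .trans _ _ _ hay (.trans _ _ _ hyz hzb)

theorem eqvGen_eq_of_le_comp (h₁ : r₁ ≤ r₂) (hwf : WellFounded (flip r₂))
    (h₃ : ∀ a b, r₂ a b →
      ∃ x y z, r₁ a x ∧ ReflTransGen r₂ x y ∧ EqvGen r₁ y z ∧ ReflTransGen r₂ b z) :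
    EqvGen r₁ = EqvGen r₂ :=
  le_antisymm (EqvGen.eqvGen_mono h₁) <| EqvGen.eqvGen_le fun _ _ hab ↦
    eqvGen_of_reflTransGen_of_le_comp h₁ hwf h₃ (.single hab)

end

theorem stmt_0 {A : Type*} (r1 r2 : A → A → Prop)
    (h1 : ∀ a b, r1 a b → r2 a b)
    (h2 : WellFounded (fun a b => r2 b a))
    (h3 : ∀ a b, r2 a b →
      ∃ x y z, r1 a x ∧ star r2 x y ∧ conv r1 y z ∧ star r2 b z) :
    conv r1 = conv r2 := by
  simp only [conv_eq_eqvGen] at h3 ⊢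
  exact eqvGen_eq_of_le_comp h1 h2 h3
end

section
/- Let →₂ be a well-founded relation on A and →₁ ⊆ →₂ with →₂ ⊆ (→₁ ∘ →₂* ∘ ↔₁* ∘ ←₂*). Then →₂* ⊆ ↔₁*. -/
namespace conv

variable {A : Type*} {r : A → A → Prop} {a b c : A}

theorem refl (a : A) : conv r a a := Relation.ReflTransGen.refl

theorem of_rel (h : r a b) : conv r a b := Relation.ReflTransGen.single (Or.inl h)

theorem symm (h : conv r a b) : conv r b a :=
  have : Std.Symm fun a b => r a b ∨ r b a := ⟨fun _ _ h => h.symm⟩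
  Std.Symm.symm (r := Relation.ReflTransGen _) _ _ h

theorem trans (h : conv r a b) (h' : conv r b c) : conv r a c :=
  Relation.ReflTransGen.trans h h'

instance : @Trans A A A (conv r) (conv r) (conv r) := ⟨trans⟩

end conv

theorem stmt_4 {A : Type*} (r1 r2 : A → A → Prop)
    (h2 : WellFounded (fun a b => r2 b a))
    (h1 : ∀ a b, r1 a b → r2 a b)
    (h3 : ∀ a b, r2 a b →
      ∃ x y z, r1 a x ∧ star r2 x y ∧ conv r1 y z ∧ star r2 b z) :
    ∀ a b, star r2 a b → conv r1 a b := by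
  intro a
  induction a using h2.induction with
  | _ a ih =>
    intro b hab
    rcases Relation.ReflTransGen.cases_head hab with rfl | ⟨c, hac, hcb⟩
    · exact conv.refl a
    obtain ⟨x, y, z, hax, hxy, hyz, hcz⟩ := h3 a c hac
    -- both `x` and `c` are `r2`-successors of `a`, so the induction hypothesis applies to them
    calc conv r1 a x := conv.of_rel hax
      conv r1 _ y := ih x (h1 a x hax) y hxy
      conv r1 _ z := hyz
      conv r1 _ c := (ih c hac z hcz).symm
      conv r1 _ b := ih c hac b hcb
end

section
/- Define strcpyAux(g, s, i) on lists g, s of integers: returns error if i < 0 or i ≥ length s; if select(s,i) = 0 and 0 ≤ i < length s then returns (error if i ≥ length g, else the list g updated at position i with value 0); if select(s,i) ≠ 0 and 0 ≤ i < length s then returns error if i ≥ length g, else strcpyAux(store(g, i, select(s,i)), s, i+1); here store(g,k,v) updates position k if 0 ≤ k < length g and is the identity otherwise. Let strcpy(g,s) = strcpyAux(g,s,0). Then for all lists s, g and integer n with 0 ≤ n < length s, n < length g, select(s,n) = 0, and select(s,i) ≠ 0 for all 0 ≤ i ≤ n-1, strcpy(g, s) returns (non-error) a list y with select(y, i) =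 select(s, i) for all 0 ≤ i ≤ n. -/
def select (a : List ℤ) (k : ℤ) : ℤ :=
  if 0 ≤ k ∧ k < (a.length : ℤ) then a.getD k.toNat 0 else 0

/-- `store a k v` updates position `k` of `a` with `v` if `0 ≤ k < length a`. -/
def store (a : List ℤ) (k v : ℤ) : List ℤ :=
  if 0 ≤ k ∧ k < (a.length : ℤ) then a.set k.toNat v else a

/-- `Sum.inl y` is the resulting array; `Sum.inr ()` is the error result. -/
def strcpyAux (g s : List ℤ) (i : ℤ) : List ℤ ⊕ Unit :=
  if _h : i < 0 ∨ (s.length : ℤ) ≤ i then Sum.inr ()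
  else if select s i = 0 then
    if (g.length : ℤ) ≤ i then Sum.inr () else Sum.inl (store g i 0)
  else if (g.length : ℤ) ≤ i then Sum.inr ()
  else strcpyAux (store g i (select s i)) s (i + 1)
termination_by ((s.length : ℤ) - i).toNat
decreasing_by omega

def strcpy (g s : List ℤ) : List ℤ ⊕ Unit := strcpyAux g s 0

lemma store_length (a : List ℤ) (k v : ℤ) : (store a k v).length = a.length := by
  unfold store; split <;> simp

lemma select_store_eq (a : List ℤ) (k v : ℤ) (h : 0 ≤ k ∧ k < (a.length : ℤ)) :
    select (store a k v) k = v := by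
  have hk : k.toNat < a.length := by omega
  simp [select, store, h, store_length, List.getD_eq_getElem?_getD, List.getElem?_set, hk]

lemma select_store_ne (a : List ℤ) (k v i : ℤ) (hne : i ≠ k) :
    select (store a k v) i = select a i := by
  unfold select store
  split
  · rename_i h
    by_cases hi : 0 ≤ i ∧ i < (a.length : ℤ)
    · have : i.toNat ≠ k.toNat := by omega
      simp [hi, List.getD_eq_getElem?_getD, List.getElem?_set, this, List.getElem_set, Ne.symm this]
    · simp [hi]
  · rfl

lemma aux_main : ∀ (k : ℕ) (s g : List ℤ) (n j : ℤ), (n - j).toNat = k →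
    0 ≤ j → j ≤ n → n < (s.length : ℤ) → n < (g.length : ℤ) →
    select s n = 0 →
    (∀ i : ℤ, 0 ≤ i → i ≤ n - 1 → select s i ≠ 0) →
    (∀ i : ℤ, 0 ≤ i → i < j → select g i = select s i) →
    ∃ y : List ℤ, strcpyAux g s j = Sum.inl y ∧
      ∀ i : ℤ, 0 ≤ i → i ≤ n → select y i = select s i := by
  intro k
  induction k with
  | zero =>
    intro s g n j hk hj hjn hns hng hsn hnz hg
    have hjn' : j = n := by omega
    subst hjn'
    rw [strcpyAux]
    have h1 : ¬ (j < 0 ∨ (s.length : ℤ) ≤ j) := by omega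
    rw [dif_neg h1, if_pos hsn, if_neg (by omega : ¬ (g.length : ℤ) ≤ j)]
    refine ⟨store g j 0, rfl, fun i hi hin => ?_⟩
    rcases eq_or_ne i j with rfl | hne
    · rw [select_store_eq g i 0 ⟨hi, by omega⟩, hsn]
    · rw [select_store_ne g _ _ _ hne]
      exact hg i hi (by omega)
  | succ k ih =>
    intro s g n j hk hj hjn hns hng hsn hnz hg
    rw [strcpyAux]
    have h1 : ¬ (j < 0 ∨ (s.length : ℤ) ≤ j) := by omega
    rw [dif_neg h1]
    have hjlt : j < n := by omega
    have hsj : select s j ≠ 0 := hnz j hj (by omega)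
    rw [if_neg hsj, if_neg (by omega : ¬ (g.length : ℤ) ≤ j)]
    apply ih s (store g j (select s j)) n (j + 1) (by omega) (by omega) (by omega) hns
      (by rw [store_length]; omega) hsn hnz
    intro i hi hij
    rcases eq_or_ne i j with rfl | hne
    · exact select_store_eq g i (select s i) ⟨hi, by omega⟩
    · rw [select_store_ne g _ _ _ hne]
      exact hg i hi (by omega)

theorem stmt_15 : ∀ (s g : List ℤ) (n : ℤ), 0 ≤ n → n < (s.length : ℤ) →
    n < (g.length : ℤ) → select s n = 0 →
    (∀ i : ℤ, 0 ≤ i → i ≤ n - 1 → select s i ≠ 0) →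
    ∃ y : List ℤ, strcpy g s = Sum.inl y ∧
      ∀ i : ℤ, 0 ≤ i → i ≤ n → select y i = select s i := by
  intro s g n hn hns hng hsn hnz
  exact aux_main (n - 0).toNat s g n 0 rfl le_rfl hn hns hng hsn hnz (fun i hi hij => by omega)
end

section
/- Let → be a well-founded binary relation on A and let E₀, E₁, …, E_n and H₀ ⊆ H₁ ⊆ … ⊆ H_n be sequences of symmetric relations and relations on A respectively such that H₀ = ∅, each step satisfies ↔_{E_k} ⊆ (→_{R∪H_n}* ∘ (↔_{E_{k+1}} ∪ =) ∘ ←_{R∪H_n}*), the final E_n = ∅, →_{R∪H_n} is well-founded, and →_{R∪H_n} ⊆ (→_R ∘ →_{R∪H_n}* ∘ (↔_{E_n} ∪ =) ∘ ←_{R∪H_n}*) where →_R = →. Then ↔_{E₀} ⊆ ↔_R* on A. -/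
lemma conv_symm {A : Type*} {r : A → A → Prop} {a b : A} (h : conv r a b) : conv r b a := by
  induction h with
  | refl => exact Relation.ReflTransGen.refl
  | tail _ hstep ih => exact Relation.ReflTransGen.head hstep.symm ih

lemma conv_trans {A : Type*} {r : A → A → Prop} {a b c : A} (h1 : conv r a b)
    (h2 : conv r b c) : conv r a c := Relation.ReflTransGen.trans h1 h2

lemma star_conv {A : Type*} {r s : A → A → Prop} (hs : ∀ a b, s a b → conv r a b)
    {a b : A} (h : star s a b) : conv r a b := by
  induction h with
  | refl => exact Relation.ReflTransGen.refl
  | tail _ hstep ih => exact conv_trans ih (hs _ _ hstep)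

lemma star_rev {A : Type*} {r : A → A → Prop} {a b : A} (h : star r a b) :
    Relation.ReflTransGen (fun p q => r q p) b a := by
  induction h with
  | refl => exact Relation.ReflTransGen.refl
  | tail _ hstep ih => exact Relation.ReflTransGen.head hstep ih

/-- Abstract soundness of rewriting induction: a derivation
`(E 0, H 0) ⊢ ⋯ ⊢ (E n, H n)` with `E n = ∅` certifies that the initial
equations `E 0` are inductive theorems, i.e. contained in the conversion of `R`. -/
theorem stmt_19 {A : Type*} (R : A → A → Prop) (n : ℕ)
    (E H : ℕ → A → A → Prop)
    (wfR : WellFounded (fun a b => R b a))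
    (hH0 : ∀ a b, ¬ H 0 a b)
    (hHmono : ∀ k, k < n → ∀ a b, H k a b → H (k + 1) a b)
    (symE : ∀ k a b, E k a b → E k b a)
    (hstep : ∀ k, k < n → ∀ a b, E k a b →
      ∃ x y, star (fun p q => R p q ∨ H n p q) a x ∧
             (E (k + 1) x y ∨ x = y) ∧
             star (fun p q => R p q ∨ H n p q) b y)
    (hEn : ∀ a b, ¬ E n a b)
    (wfRH : WellFounded (fun a b => (R b a ∨ H n b a)))
    (hRH : ∀ a b, R a b ∨ H n a b →
      ∃ x y z, R a x ∧ star (fun p q => R p q ∨ H n p q) x y ∧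
        (E n y z ∨ y = z) ∧ star (fun p q => R p q ∨ H n p q) b z) :
    ∀ a b, E 0 a b → conv R a b := by
  set S : A → A → Prop := fun p q => R p q ∨ H n p q with hS
  have wfT : WellFounded (Relation.TransGen (fun a b => S b a)) := wfRH.transGen
  -- every single S step is R-convertible
  have key : ∀ a, ∀ b, S a b → conv R a b := by
    intro a
    induction a using wfT.induction with
    | _ a IH =>
      intro b hab
      obtain ⟨x, y, z, hax, hxy, hyz, hbz⟩ := hRH a b hab
      have hyz' : y = z := hyz.resolve_left (hEn y z)
      subst hyz'
      have step1 : conv R a x := Relation.ReflTransGen.single (Or.inl hax)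
      have chain : ∀ c d, star S c d →
          Relation.TransGen (fun p q => S q p) c a → conv R c d := by
        intro c d h
        induction h with
        | refl => intro _; exact Relation.ReflTransGen.refl
        | @tail e f hce hef ih =>
          intro hc
          have hce' : conv R c e := ih hc
          have he_below : Relation.TransGen (fun p q => S q p) e a := by
            exact Relation.TransGen.trans_right (star_rev hce) hc
          exact conv_trans hce' (IH e he_below f hef)
      have hax' : Relation.TransGen (fun p q => S q p) x a :=
        Relation.TransGen.single (Or.inl hax)
      have hab' : Relation.TransGen (fun p q => S q p) b a :=
        Relation.TransGen.single hab
      exact conv_trans (conv_trans step1 (chain x y hxy hax'))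
        (conv_symm (chain b y hbz hab'))
  have starS : ∀ a b, star S a b → conv R a b := fun a b h => star_conv key h
  -- descending induction on equations
  have main : ∀ m k, k + m = n → ∀ a b, E k a b → conv R a b := by
    intro m
    induction m with
    | zero =>
      intro k hk a b hab
      have hk' : k = n := by omega
      subst hk'
      exact absurd hab (hEn a b)
    | succ m ih =>
      intro k hk a b hab
      have hkn : k < n := by omega
      obtain ⟨x, y, hax, hxy, hby⟩ := hstep k hkn a b hab
      have hxy' : conv R x y := by
        rcases hxy with h | rfl
        · exact ih (k + 1) (by omega) x y h
        · exact Relation.ReflTransGen.refl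
      exact conv_trans (conv_trans (starS a x hax) hxy') (conv_symm (starS b y hby))
  exact fun a b hab => main n 0 (by omega) a b hab
end
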